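/- arXiv:1902.05907 — 3 statements merged into one kernel-verified Lean document; each statement's English description precedes it below -/
import Mathlib

section
/- For every f ∈ S(0,∞) and every u > 0, the K-functional satisfies K_u(f) = inf_{s>0} [ u·s + d_f(s) ], where d_f is the distribution function ofف f. (Here the infimum on the right is over all s > 0 of the quantity u·s + m({t ∈ (0,∞) : |f(t)| > s}).) -/
open MeasureTheory Filter Set
open scoped ENNReal NNReal

/-- Lebesgue measure on `(0, ∞)`. -/
noncomputable def mLeb : Measure ℝ := volume.restrict (Set.Ioi (0:ℝ))

/-- The distribution function `d_f(s) = m {t ∈ (0,∞) : |f t| > s}`. -/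
noncomputable def distFun (f : ℝ → ℝ) (s : ℝ) : ℝ≥0∞ := mLeb {t | s < |f t|}

/-- `f ∈ S(0,∞)`: `f` is measurable and `d_f(s) < ∞` for some `s > 0`. -/
def MemS (f : ℝ → ℝ) : Prop := Measurable f ∧ ∃ s > (0:ℝ), distFun f s < ⊤

/-- `‖g‖₀ = m (supp g)`, the `L₀`-group-norm. -/
noncomputable def norm0 (g : ℝ → ℝ) : ℝ≥0∞ := mLeb (Function.support g)

/-- `‖h‖∞`, the essential supremum norm on `(0,∞)`. -/
noncomputable def normInf (h : ℝ → ℝ) : ℝ≥0∞ := eLpNorm h ⊤ mLeb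

/-- `g ∈ L₀(0,∞)`: measurable with support of finite measure. -/
def MemL0 (g : ℝ → ℝ) : Prop := Measurable g ∧ norm0 g < ⊤

/-- `h ∈ L∞(0,∞)`: measurable and essentially bounded. -/
def MemLinf (h : ℝ → ℝ) : Prop := Measurable h ∧ normInf h < ⊤

/-- The K-functional `K_u(f) = inf {‖g‖₀ + u‖h‖∞ : f = g + h, g ∈ L₀, h ∈ L∞}`. -/
noncomputable def Kfun (u : ℝ) (f : ℝ → ℝ) : ℝ≥0∞ :=
  ⨅ (g : ℝ → ℝ) (h : ℝ → ℝ) (_ : MemL0 g) (_ : MemLinf h) (_ : f = g + h),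
    norm0 g + ENNReal.ofReal u * normInf h

/-- The decreasing rearrangement `μ(t; f) = inf {s ≥ 0 : d_f(s) ≤ t}`. -/
noncomputable def rearr (f : ℝ → ℝ) (t : ℝ) : ℝ :=
  sInf {s : ℝ | 0 ≤ s ∧ distFun f s ≤ ENNReal.ofReal t}

/-- The Δ-norm `‖f‖_S = inf_{s>0} [s + d_f(s)]`. -/
noncomputable def normS (f : ℝ → ℝ) : ℝ≥0∞ :=
  ⨅ (s : ℝ) (_ : 0 < s), ENNReal.ofReal s + distFun f s

/- The upper bound comes from splitting `f` at height `s` into its truncation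
`max (min f s) (-s)`, of sup norm at most `s`, and the remainder, supported in `{s < |f|}`.
For the lower bound, if `f = g + h` then off a null set `|h| ≤ ‖h‖∞`, so for every
`s > ‖h‖∞` the set `{s < |f|}` lies in `supp g`; letting `s ↓ ‖h‖∞` gives
`u s + d_f(s) ≤ u ‖h‖∞ + ‖g‖₀ + ε`. -/

noncomputable def truncate (s : ℝ) (f : ℝ → ℝ) : ℝ → ℝ := fun t => max (min (f t) s) (-s)

lemma measurable_truncate {f : ℝ → ℝ} (hf : Measurable f) (s : ℝ) :
    Measurable (truncate s f) :=
  (hf.min measurable_const).max measurable_const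

lemma abs_truncate_le (f : ℝ → ℝ) {s : ℝ} (hs : 0 ≤ s) (t : ℝ) : |truncate s f t| ≤ s :=
  abs_le.2 ⟨le_max_right _ _, max_le (min_le_right _ _) (neg_le_self hs)⟩

lemma truncate_eq_self_of_abs_le {f : ℝ → ℝ} {s t : ℝ} (h : |f t| ≤ s) :
    truncate s f t = f t := by
  rw [abs_le] at h
  simp only [truncate, min_eq_left h.2, max_eq_left h.1]

lemma normInf_truncate_le (f : ℝ → ℝ) {s : ℝ} (hs : 0 ≤ s) :
    normInf (truncate s f) ≤ ENNReal.ofReal s := by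
  simpa [normInf] using eLpNorm_le_of_ae_bound (μ := mLeb) (p := ⊤)
    (Eventually.of_forall fun t => (Real.norm_eq_abs _).trans_le (abs_truncate_le f hs t))

lemma norm0_sub_truncate_le (f : ℝ → ℝ) (s : ℝ) :
    norm0 (f - truncate s f) ≤ distFun f s := by
  refine measure_mono fun t ht => ?_
  by_contra hle
  exact ht (sub_eq_zero.2 (truncate_eq_self_of_abs_le (not_lt.1 hle)).symm)

lemma Kfun_le {u : ℝ} {f g h : ℝ → ℝ} (hg : MemL0 g) (hh : MemLinf h) (hfgh : f = g + h) :
    Kfun u f ≤ norm0 g + ENNReal.ofReal u * normInf h :=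
  iInf_le_of_le g <| iInf_le_of_le h <| iInf_le_of_le hg <| iInf_le_of_le hh <|
    iInf_le_of_le hfgh le_rfl

lemma Kfun_le_ofReal_mul_add_distFun {f : ℝ → ℝ} (hf : Measurable f) {u s : ℝ} (hu : 0 ≤ u)
    (hs : 0 ≤ s) : Kfun u f ≤ ENNReal.ofReal (u * s) + distFun f s := by
  rcases eq_top_or_lt_top (distFun f s) with htop | hfin
  · simp [htop]
  have hg : MemL0 (f - truncate s f) :=
    ⟨hf.sub (measurable_truncate hf s), (norm0_sub_truncate_le f s).trans_lt hfin⟩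
  have hh : MemLinf (truncate s f) :=
    ⟨measurable_truncate hf s, (normInf_truncate_le f hs).trans_lt ENNReal.ofReal_lt_top⟩
  calc Kfun u f ≤ norm0 (f - truncate s f) + ENNReal.ofReal u * normInf (truncate s f) :=
        Kfun_le hg hh (sub_add_cancel f _).symm
    _ ≤ distFun f s + ENNReal.ofReal u * ENNReal.ofReal s := by
        gcongr
        · exact norm0_sub_truncate_le f s
        · exact normInf_truncate_le f hs
    _ = ENNReal.ofReal (u * s) + distFun f s := by rw [ENNReal.ofReal_mul hu, add_comm]

lemma distFun_add_le_norm0 (g : ℝ → ℝ) {h : ℝ → ℝ} {s : ℝ}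
    (hs : normInf h < ENNReal.ofReal s) : distFun (g + h) s ≤ norm0 g := by
  have hh : ∀ᵐ t ∂mLeb, |h t| < s := by
    filter_upwards [enorm_ae_le_eLpNormEssSup h mLeb] with t ht
    rw [normInf, eLpNorm_exponent_top] at hs
    rw [← ofReal_norm] at ht
    exact (ENNReal.ofReal_lt_ofReal_iff_of_nonneg (abs_nonneg _)).1 (ht.trans_lt hs)
  refine measure_mono_ae ?_
  filter_upwards [hh] with t hht hts
  refine Function.mem_support.2 fun hgt => ?_
  have hst : s < |g t + h t| := hts
  rw [hgt, zero_add] at hst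
  exact hst.not_gt hht

lemma iInf_ofReal_mul_add_distFun_le {u : ℝ} (hu : 0 < u) {g h : ℝ → ℝ} (hh : normInf h ≠ ⊤) :
    ⨅ (s : ℝ) (_ : 0 < s), ENNReal.ofReal (u * s) + distFun (g + h) s
      ≤ norm0 g + ENNReal.ofReal u * normInf h := by
  refine ENNReal.le_of_forall_pos_le_add fun ε hε _ => ?_
  obtain ⟨b, hb0, hb⟩ : ∃ b, 0 ≤ b ∧ normInf h = ENNReal.ofReal b :=
    ⟨_, ENNReal.toReal_nonneg, (ENNReal.ofReal_toReal hh).symm⟩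
  have hεu : 0 < (ε : ℝ) / u := div_pos hε hu
  have hbs : normInf h < ENNReal.ofReal (b + ε / u) := by
    rw [hb]
    exact (ENNReal.ofReal_lt_ofReal_iff (by positivity)).2 (lt_add_of_pos_right b hεu)
  have hus : ENNReal.ofReal (u * (b + ε / u)) = ENNReal.ofReal u * normInf h + ε := by
    rw [mul_add, mul_div_cancel₀ _ hu.ne', ENNReal.ofReal_add (mul_nonneg hu.le hb0) ε.coe_nonneg,
      ENNReal.ofReal_mul hu.le, ← hb, ENNReal.ofReal_coe_nnreal]
  calc ⨅ (s : ℝ) (_ : 0 < s), ENNReal.ofReal (u * s) + distFun (g + h) s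
      ≤ ENNReal.ofReal (u * (b + ε / u)) + distFun (g + h) (b + ε / u) :=
        iInf₂_le _ (by positivity)
    _ ≤ ENNReal.ofReal u * normInf h + ε + norm0 g := by
        rw [hus]
        gcongr
        exact distFun_add_le_norm0 g hbs
    _ = norm0 g + ENNReal.ofReal u * normInf h + ε := by ring

/-- `K_u(f) = inf_{s>0} [u·s + d_f(s)]` for every `f ∈ S(0,∞)`, `u > 0`. -/
theorem stmt1 (f : ℝ → ℝ) (hf : MemS f) (u : ℝ) (hu : 0 < u) :
    Kfun u f = ⨅ (s : ℝ) (_ : 0 < s), ENNReal.ofReal (u * s) + distFun f s := by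
  refine le_antisymm (le_iInf₂ fun s hs => Kfun_le_ofReal_mul_add_distFun hf.1 hu.le hs.le) ?_
  refine le_iInf fun g => le_iInf fun h => le_iInf fun _ => le_iInf fun hh => le_iInf fun hfgh => ?_
  subst hfgh
  exact iInf_ofReal_mul_add_distFun_le hu hh.2.ne
end

section
/- Let k₁ > 0 and τ > 0 and let x = k₁·χ_{(0,τ)} (the function equal to k₁ on (0,τ) and 0 elsewhere). Then for every u > 0, K_u(x) = min(u·k₁, τ). -/
open MeasureTheory Filter Set
open scoped ENNReal NNReal

@[simp]
lemma norm0_zero : norm0 0 = 0 := by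
  simp [norm0]

@[simp]
lemma normInf_zero : normInf 0 = 0 :=
  eLpNorm_zero

lemma memL0_zero : MemL0 0 :=
  ⟨measurable_const, by simp⟩

lemma memLinf_zero : MemLinf 0 :=
  ⟨measurable_const, by simp⟩

lemma Kfun_le_norm0 (u : ℝ) {f : ℝ → ℝ} (hf : MemL0 f) : Kfun u f ≤ norm0 f := by
  simpa using Kfun_le (u := u) hf memLinf_zero (add_zero f).symm

lemma Kfun_le_mul_normInf (u : ℝ) {f : ℝ → ℝ} (hf : MemLinf f) :
    Kfun u f ≤ ENNReal.ofReal u * normInf f := by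
  simpa using Kfun_le (u := u) memL0_zero hf (zero_add f).symm

lemma le_normInf_of_le_enorm {h : ℝ → ℝ} {A : Set ℝ} {k : ℝ≥0∞} (hA : mLeb A ≠ 0)
    (hk : ∀ t ∈ A, k ≤ ‖h t‖ₑ) : k ≤ normInf h := by
  rw [normInf, eLpNorm_exponent_top]
  by_contra! hlt
  exact hA <|
    measure_mono_null (fun t ht => hlt.trans_le (hk t ht)) (meas_eLpNormEssSup_lt (f := h))

lemma min_le_Kfun {u : ℝ} {f : ℝ → ℝ} {s : Set ℝ} {k : ℝ≥0∞} (hk : ∀ t ∈ s, k ≤ ‖f t‖ₑ) :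
    min (ENNReal.ofReal u * k) (mLeb s) ≤ Kfun u f := by
  refine le_iInf fun g => le_iInf fun h => le_iInf fun _ => le_iInf fun _ => le_iInf fun hfgh => ?_
  set A := s \ Function.support g
  by_cases hA : mLeb A = 0
  · have hs : mLeb s ≤ norm0 g :=
      calc mLeb s ≤ mLeb (A ∪ Function.support g) := measure_mono (subset_sdiff_union _ _)
        _ ≤ mLeb A + norm0 g := measure_union_le _ _
        _ = norm0 g := by rw [hA, zero_add]
    exact (min_le_right _ _).trans (hs.trans le_self_add)
  · have hh : ∀ t ∈ A, k ≤ ‖h t‖ₑ := fun t ht => by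
      have hgt : g t = 0 := Function.notMem_support.mp ht.2
      simpa [hfgh, hgt] using hk t ht.1
    calc min (ENNReal.ofReal u * k) (mLeb s) ≤ ENNReal.ofReal u * k := min_le_left _ _
      _ ≤ ENNReal.ofReal u * normInf h := by gcongr; exact le_normInf_of_le_enorm hA hh
      _ ≤ norm0 g + ENNReal.ofReal u * normInf h := le_add_self

lemma mLeb_Ioo_zero (τ : ℝ) : mLeb (Ioo 0 τ) = ENNReal.ofReal τ := by
  rw [mLeb, Measure.restrict_apply measurableSet_Ioo, Ioo_inter_Ioi]
  simp

lemma norm0_indicator_const {s : Set ℝ} {c : ℝ} (hc : c ≠ 0) :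
    norm0 (s.indicator fun _ => c) = mLeb s := by
  rw [norm0, support_indicator, Function.support_const hc, inter_univ]

lemma normInf_indicator_const_le (s : Set ℝ) (c : ℝ) :
    normInf (s.indicator fun _ => c) ≤ ‖c‖ₑ := by
  rw [normInf, eLpNorm_exponent_top]
  exact eLpNormEssSup_indicator_const_le s c

theorem stmt9_general (k₁ τ : ℝ) (hk₁ : 0 < k₁) (u : ℝ) (hu : 0 < u) :
    Kfun u (Set.indicator (Set.Ioo (0:ℝ) τ) fun _ => k₁) =
      ENNReal.ofReal (min (u * k₁) τ) := by
  set x : ℝ → ℝ := Set.indicator (Set.Ioo (0:ℝ) τ) fun _ => k₁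
  have hx : Measurable x := measurable_const.indicator measurableSet_Ioo
  have hnorm0 : norm0 x = mLeb (Ioo 0 τ) := norm0_indicator_const hk₁.ne'
  have hnormInf : normInf x ≤ ENNReal.ofReal k₁ := by
    simpa [Real.enorm_eq_ofReal hk₁.le] using normInf_indicator_const_le (Ioo 0 τ) k₁
  have hgoal : ENNReal.ofReal (min (u * k₁) τ) =
      min (ENNReal.ofReal u * ENNReal.ofReal k₁) (mLeb (Ioo 0 τ)) := by
    rw [ENNReal.ofReal_min, ENNReal.ofReal_mul hu.le, mLeb_Ioo_zero]
  rw [hgoal]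
  refine le_antisymm (le_min ?_ ?_) (min_le_Kfun fun t ht => ?_)
  · calc Kfun u x ≤ ENNReal.ofReal u * normInf x :=
          Kfun_le_mul_normInf u ⟨hx, hnormInf.trans_lt ENNReal.ofReal_lt_top⟩
      _ ≤ ENNReal.ofReal u * ENNReal.ofReal k₁ := by gcongr
  · rw [← hnorm0]
    exact Kfun_le_norm0 u ⟨hx, by simp [hnorm0, mLeb_Ioo_zero]⟩
  · simp [x, indicator_of_mem ht, Real.enorm_eq_ofReal hk₁.le]

/-- for `x = k₁·χ_{(0,τ)}` one has `K_u(x) = min(u·k₁, τ)` for every `u > 0`. -/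
theorem stmt9 (k₁ τ : ℝ) (hk₁ : 0 < k₁) (hτ : 0 < τ) (u : ℝ) (hu : 0 < u) :
    Kfun u (Set.indicator (Set.Ioo (0:ℝ) τ) fun _ => k₁) =
      ENNReal.ofReal (min (u * k₁) τ) :=
  stmt9_general k₁ τ hk₁ u hu
end

section
/- Let a, x ∈ S(0,∞) and C > 0. If μ(s; x) ≤ C·μ(s/C; a) for every s > 0, then K_u(x) ≤ C·K_u(a) for every u > 0 (with the same constant C). -/
open MeasureTheory Filter Set
open scoped ENNReal NNReal

/-!
If `a = g + h` with `‖h‖∞ ≤ M`, then `d_a(M) ≤ ‖g‖₀`, so `μ(t; a) ≤ M` for `t > ‖g‖₀`. The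
hypothesis turns this into `μ(t; x) ≤ C M` for `t > C ‖g‖₀`, i.e. `d_x(r) ≤ C ‖g‖₀` for `r > C M`.
Truncating `x` at height `r` gives `K_u(x) ≤ d_x(r) + u r`, and letting `r ↓ C M` yields
`K_u(x) ≤ C (‖g‖₀ + u ‖h‖∞)`.
-/

open Topology

lemma distFun_antitone (f : ℝ → ℝ) : Antitone (distFun f) :=
  fun _ _ hs => measure_mono fun _ ht => lt_of_le_of_lt hs ht

lemma tendsto_distFun_atTop (f : ℝ → ℝ) (hf : MemS f) :
    Tendsto (distFun f) atTop (𝓝 0) := by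
  obtain ⟨hmeas, s₀, -, hfin⟩ := hf
  have hempty : ⋂ s : ℝ, {t | s < |f t|} = ∅ :=
    eq_empty_of_forall_notMem fun t ht => lt_irrefl |f t| (mem_iInter.mp ht |f t|)
  have h := tendsto_measure_iInter_atTop (μ := mLeb) (s := fun s : ℝ => {t | s < |f t|})
    (fun s => (measurableSet_lt measurable_const hmeas.abs).nullMeasurableSet)
    (fun _ _ hs _ ht => lt_of_le_of_lt hs ht) ⟨s₀, hfin.ne⟩
  rw [hempty, measure_empty] at h
  exact h

lemma rearr_le_of_distFun_le (f : ℝ → ℝ) {s t : ℝ} (hs : 0 ≤ s)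
    (hst : distFun f s ≤ ENNReal.ofReal t) : rearr f t ≤ s :=
  csInf_le ⟨0, fun _ hr => hr.1⟩ ⟨hs, hst⟩

lemma distFun_le_of_rearr_lt (f : ℝ → ℝ) (hf : MemS f) {t r : ℝ} (ht : 0 < t)
    (hr : rearr f t < r) : distFun f r ≤ ENNReal.ofReal t := by
  obtain ⟨s, hs⟩ := ((tendsto_distFun_atTop f hf).eventually
    (gt_mem_nhds (ENNReal.ofReal_pos.mpr ht))).exists_forall_of_atTop
  obtain ⟨s', hs'mem, hs'r⟩ := exists_lt_of_csInf_lt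
    (by exact ⟨max s 0, le_max_right _ _, (hs _ (le_max_left _ _)).le⟩) hr
  exact (distFun_antitone f hs'r.le).trans hs'mem.2

lemma distFun_le_norm0_of_eq_add {f g h : ℝ → ℝ} (hfgh : f = g + h) {M : ℝ}
    (hM : ∀ᵐ t ∂mLeb, |h t| ≤ M) : distFun f M ≤ norm0 g := by
  have hsub : {t | M < |f t|} ⊆ Function.support g ∪ {t | ¬ |h t| ≤ M} := by
    intro t ht
    by_cases hgt : g t = 0
    · right
      simpa [hfgh, hgt] using ht
    · exact Or.inl hgt
  calc distFun f M ≤ mLeb (Function.support g ∪ {t | ¬ |h t| ≤ M}) := measure_mono hsub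
    _ ≤ norm0 g + mLeb {t | ¬ |h t| ≤ M} := measure_union_le _ _
    _ = norm0 g := by rw [ae_iff.mp hM, add_zero]

lemma ae_abs_le_toReal_normInf {h : ℝ → ℝ} (hh : normInf h ≠ ⊤) :
    ∀ᵐ t ∂mLeb, |h t| ≤ (normInf h).toReal := by
  filter_upwards [ae_le_eLpNormEssSup (f := h) (μ := mLeb)] with t ht
  rw [← Real.norm_eq_abs, ← toReal_enorm]
  exact ENNReal.toReal_mono hh (by rwa [normInf, eLpNorm_exponent_top])

/-- Witnessed by the truncation `max (-r) (min f r)` of `f` at height `r`. -/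
lemma Kfun_le_distFun_add (u : ℝ) {f : ℝ → ℝ} (hf : Measurable f) {r : ℝ} (hr : 0 ≤ r) :
    Kfun u f ≤ distFun f r + ENNReal.ofReal u * ENNReal.ofReal r := by
  rcases eq_top_or_lt_top (distFun f r) with htop | hfin
  · simp [htop]
  set h : ℝ → ℝ := fun t => max (-r) (min (f t) r)
  have hmeas : Measurable h := measurable_const.max (hf.min measurable_const)
  have hsupp : Function.support (f - h) ⊆ {t | r < |f t|} := by
    intro t ht
    by_contra hle
    rw [mem_ofPred_eq, not_lt, abs_le] at hle
    simp [h, min_eq_left hle.2, max_eq_right hle.1] at ht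
  have hbound : normInf h ≤ ENNReal.ofReal r := by
    rw [normInf, eLpNorm_exponent_top]
    refine eLpNormEssSup_le_of_ae_bound (Eventually.of_forall fun t => ?_)
    rw [Real.norm_eq_abs, abs_le]
    exact ⟨le_max_left _ _, max_le (by linarith) (min_le_right _ _)⟩
  calc Kfun u f ≤ norm0 (f - h) + ENNReal.ofReal u * normInf h :=
        iInf₂_le_of_le (f - h) h <| iInf₂_le_of_le
          ⟨hf.sub hmeas, (measure_mono hsupp).trans_lt hfin⟩
          ⟨hmeas, hbound.trans_lt ENNReal.ofReal_lt_top⟩ <| iInf_le _ (sub_add_cancel f h).symm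
    _ ≤ distFun f r + ENNReal.ofReal u * ENNReal.ofReal r := by
        gcongr
        exact measure_mono hsupp

section Majorization

variable {a x : ℝ → ℝ} {C : ℝ}

lemma distFun_le_mul_of_rearr_le (hx : MemS x) (hC : 0 < C)
    (h : ∀ s > (0:ℝ), rearr x s ≤ C * rearr a (s / C)) {M r : ℝ} (hM : 0 ≤ M)
    (hr : C * M < r) : distFun x r ≤ ENNReal.ofReal C * distFun a M := by
  rcases eq_top_or_lt_top (distFun a M) with htop | hfin
  · simp [htop, hC]
  refine ENNReal.le_of_forall_pos_le_add fun η hη _ => ?_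
  set t := C * (distFun a M).toReal + η
  have ht : 0 < t := by positivity
  have hrearr_a : rearr a (t / C) ≤ M := by
    refine rearr_le_of_distFun_le a hM ?_
    rw [← ENNReal.ofReal_toReal hfin.ne]
    exact ENNReal.ofReal_le_ofReal <| (le_div_iff₀ hC).mpr (by simp only [t]; linarith)
  have hrearr_x : rearr x t < r :=
    ((h t ht).trans (mul_le_mul_of_nonneg_left hrearr_a hC.le)).trans_lt hr
  calc distFun x r ≤ ENNReal.ofReal t := distFun_le_of_rearr_lt x hx ht hrearr_x
    _ = ENNReal.ofReal C * distFun a M + η := by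
        rw [ENNReal.ofReal_add (by positivity) η.coe_nonneg, ENNReal.ofReal_mul hC.le,
          ENNReal.ofReal_toReal hfin.ne, ENNReal.ofReal_coe_nnreal]

lemma Kfun_le_mul_distFun_add (hx : MemS x) (hC : 0 < C)
    (h : ∀ s > (0:ℝ), rearr x s ≤ C * rearr a (s / C)) (u : ℝ) {M : ℝ} (hM : 0 ≤ M) :
    Kfun u x ≤ ENNReal.ofReal C * (distFun a M + ENNReal.ofReal u * ENNReal.ofReal M) := by
  have hcont : Continuous fun r =>
      ENNReal.ofReal C * distFun a M + ENNReal.ofReal u * ENNReal.ofReal r :=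
    continuous_const.add ((ENNReal.continuous_const_mul ENNReal.ofReal_ne_top).comp
      ENNReal.continuous_ofReal)
  have hbound : ∀ r > C * M,
      Kfun u x ≤ ENNReal.ofReal C * distFun a M + ENNReal.ofReal u * ENNReal.ofReal r :=
    fun r hr => (Kfun_le_distFun_add u hx.1 ((mul_nonneg hC.le hM).trans hr.le)).trans <|
      add_le_add_left (distFun_le_mul_of_rearr_le hx hC h hM hr) _
  calc Kfun u x
      ≤ ENNReal.ofReal C * distFun a M + ENNReal.ofReal u * ENNReal.ofReal (C * M) :=
        ge_of_tendsto (hcont.continuousWithinAt (s := Ioi (C * M)) (x := C * M)).tendsto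
          (eventually_nhdsWithin_of_forall hbound)
    _ = ENNReal.ofReal C * (distFun a M + ENNReal.ofReal u * ENNReal.ofReal M) := by
        rw [ENNReal.ofReal_mul hC.le]
        ring

end Majorization

theorem stmt13_general (a x : ℝ → ℝ) (hx : MemS x) (C : ℝ) (hC : 0 < C)
    (h : ∀ s > (0:ℝ), rearr x s ≤ C * rearr a (s / C)) :
    ∀ u > (0:ℝ), Kfun u x ≤ ENNReal.ofReal C * Kfun u a := by
  intro u _
  simp only [Kfun, ENNReal.mul_iInf_of_ne (ENNReal.ofReal_pos.mpr hC).ne' ENNReal.ofReal_ne_top,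
    le_iInf_iff]
  intro g k _ hk hagk
  have hk_fin : normInf k ≠ ⊤ := hk.2.ne
  calc Kfun u x
      ≤ ENNReal.ofReal C * (distFun a (normInf k).toReal
          + ENNReal.ofReal u * ENNReal.ofReal (normInf k).toReal) :=
        Kfun_le_mul_distFun_add hx hC h u ENNReal.toReal_nonneg
    _ ≤ ENNReal.ofReal C * (norm0 g + ENNReal.ofReal u * normInf k) := by
        rw [ENNReal.ofReal_toReal hk_fin]
        gcongr
        exact distFun_le_norm0_of_eq_add hagk (ae_abs_le_toReal_normInf hk_fin)

/-- if `μ(s; x) ≤ C·μ(s/C; a)` for every `s > 0`, then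
`K_u(x) ≤ C·K_u(a)` for every `u > 0` (same constant `C`). -/
theorem stmt13 (a x : ℝ → ℝ) (ha : MemS a) (hx : MemS x) (C : ℝ) (hC : 0 < C)
    (h : ∀ s > (0:ℝ), rearr x s ≤ C * rearr a (s / C)) :
    ∀ u > (0:ℝ), Kfun u x ≤ ENNReal.ofReal C * Kfun u a :=
  stmt13_general a x hx C hC h
end
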